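/- arXiv:1802.07175 — 5 statements merged into one kernel-verified Lean document; each statement's English description precedes it below -/
import Mathlib

section
/- Two finite abstract simplicial complexes K1 and K2 are isomorphic if and only if the colored graphs (Sd1(K1), dim) and (Sd1(K2), dim) are color-preserving isomorphic. -/
/-!
Adjacency in `Sd1 K` is comparability of simplices, and of two comparable simplices the smaller
one has the smaller dimension; so a colour-preserving isomorphism of the `Sd1` graphs is an
isomorphism of the posets of nonempty simplices. Such a poset isomorphism maps the singletons
(colour `0`) onto the singletons, which gives a vertex bijection `f`, and since `a ∈ σ` iff
`{a} ⊆ σ` it sends every simplex `σ` to `f σ`; hence `f` is an isomorphism of complexes.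
Conversely, a complex isomorphism acts on simplices preserving inclusion and cardinality.
-/

open Finset

/-- A finite abstract simplicial complex on a vertex type `V`: a finite family of
finite sets that is closed under taking subsets (and contains the empty set). -/
structure AbstractComplex (V : Type*) [DecidableEq V] where
  simplices : Finset (Finset V)
  empty_mem : ∅ ∈ simplices
  downClosed : ∀ σ ∈ simplices, ∀ τ ⊆ σ, τ ∈ simplices

namespace AbstractComplex

variable {V : Type*} [DecidableEq V]

/-- The vertices of a complex `K`: the elements appearing in singletons of `K`. -/
def Vert (K : AbstractComplex V) : Type _ := {a : V // ({a} : Finset V) ∈ K.simplices}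

/-- The vertices of `Sd1 K`: the nonempty simplices of `K`. -/
def SdVert (K : AbstractComplex V) : Type _ :=
  {σ : Finset V // σ ∈ K.simplices ∧ σ.Nonempty}

/-- The 1-skeleton of the barycentric subdivision of `K`: vertices are the nonempty
simplices of `K`, and two simplices are adjacent iff one is a proper subset of
the other. -/
def Sd1 (K : AbstractComplex V) : SimpleGraph (SdVert K) where
  Adj σ τ := σ.1 ⊂ τ.1 ∨ τ.1 ⊂ σ.1
  symm := ⟨fun _ _ h => h.symm⟩
  loopless := ⟨fun σ h => by
    rcases h with h | h <;> exact (ssubset_irrefl σ.1) h⟩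

/-- The coloring `dim` on the vertices of `Sd1 K`: a simplex `σ` gets
color `|σ| - 1`. -/
def dimColor (K : AbstractComplex V) (σ : K.SdVert) : ℕ := σ.1.card - 1

end AbstractComplex

/-- `f` is an isomorphism between the simplicial complexes `K1` and `K2`:
a bijection between the vertices such that a finite set `{v₁, …, v_k}` of vertices
is a simplex of `K1` precisely when `{f v₁, …, f v_k}` is a simplex of `K2`. -/
def IsComplexIso {V1 V2 : Type*} [DecidableEq V1] [DecidableEq V2]
    (K1 : AbstractComplex V1) (K2 : AbstractComplex V2)
    (f : K1.Vert ≃ K2.Vert) : Prop :=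
  ∀ s : Finset K1.Vert,
    s.image (fun a => a.1) ∈ K1.simplices ↔
      s.image (fun a => (f a).1) ∈ K2.simplices

theorem lt_iff_lt_of_comparable_iff {α β γ : Type*} [Preorder α] [Preorder β] [Preorder γ]
    {rα : α → γ} {rβ : β → γ} (hα : StrictMono rα) (hβ : StrictMono rβ) (e : α ≃ β)
    (hr : ∀ a, rβ (e a) = rα a) (he : ∀ a b, e a < e b ∨ e b < e a ↔ a < b ∨ b < a)
    (a b : α) : e a < e b ↔ a < b := by
  have hrank {a b : α} (h : e a < e b) : rα a < rα b := by simpa only [hr] using hβ h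
  exact ⟨fun h => ((he a b).1 (.inl h)).resolve_right fun hba => (hrank h).asymm (hα hba),
    fun h => ((he a b).2 (.inl h)).resolve_right fun hba => (hα h).asymm (hrank hba)⟩

namespace AbstractComplex

section OneComplex

variable {V : Type*} [DecidableEq V] {K : AbstractComplex V}

instance (K : AbstractComplex V) : DecidableEq K.Vert :=
  inferInstanceAs (DecidableEq {a : V // ({a} : Finset V) ∈ K.simplices})

instance (K : AbstractComplex V) : PartialOrder K.SdVert :=
  Subtype.partialOrder _

theorem strictMono_card : StrictMono fun σ : K.SdVert => σ.1.card :=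
  Finset.card_strictMono.comp (Subtype.strictMono_coe _)

theorem singleton_mem_of_mem {σ : Finset V} (hσ : σ ∈ K.simplices) {v : V} (hv : v ∈ σ) :
    {v} ∈ K.simplices :=
  K.downClosed σ hσ {v} (singleton_subset_iff.2 hv)

theorem Vert.val_injective : Function.Injective fun a : K.Vert => a.1 :=
  fun _ _ => Subtype.ext

def verts (K : AbstractComplex V) (σ : Finset V) : Finset K.Vert :=
  σ.subtype fun v => ({v} : Finset V) ∈ K.simplices

@[simp]
theorem mem_verts {σ : Finset V} {a : K.Vert} : a ∈ K.verts σ ↔ a.1 ∈ σ :=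
  mem_subtype

theorem image_val_verts {σ : Finset V} (hσ : σ ∈ K.simplices) :
    (K.verts σ).image (fun a => a.1) = σ := by
  ext v
  simp only [mem_image, mem_verts]
  exact ⟨fun ⟨a, ha, hav⟩ => hav ▸ ha, fun hv => ⟨⟨v, singleton_mem_of_mem hσ hv⟩, hv, rfl⟩⟩

theorem verts_image_val (s : Finset K.Vert) : K.verts (s.image fun a => a.1) = s := by
  ext a
  simp only [mem_verts, mem_image]
  exact ⟨fun ⟨b, hb, hba⟩ => (Subtype.ext hba : b = a) ▸ hb, fun ha => ⟨a, ha, rfl⟩⟩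

theorem card_verts {σ : Finset V} (hσ : σ ∈ K.simplices) : (K.verts σ).card = σ.card := by
  rw [← card_image_of_injective _ Vert.val_injective, image_val_verts hσ]

theorem verts_subset_verts_iff {σ τ : Finset V} (hσ : σ ∈ K.simplices) :
    K.verts σ ⊆ K.verts τ ↔ σ ⊆ τ := by
  refine ⟨fun h v hv => ?_, fun h a ha => mem_verts.2 (h (mem_verts.1 ha))⟩
  have hv' : (⟨v, singleton_mem_of_mem hσ hv⟩ : K.Vert) ∈ K.verts σ := mem_verts.2 hv
  exact mem_verts.1 (h hv')

def single (a : K.Vert) : K.SdVert :=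
  ⟨{a.1}, a.2, singleton_nonempty _⟩

theorem single_le_iff {a : K.Vert} {σ : K.SdVert} : single a ≤ σ ↔ a.1 ∈ σ.1 :=
  singleton_subset_iff

noncomputable def singleEquiv (K : AbstractComplex V) : K.Vert ≃ {σ : K.SdVert // σ.1.card = 1} :=
  Equiv.ofBijective (fun a => ⟨single a, card_singleton _⟩) <| by
    refine ⟨fun a b h => Subtype.ext (singleton_inj.1 (congrArg (·.1.1) h)), ?_⟩
    rintro ⟨⟨σ, hσ, -⟩, h⟩
    obtain ⟨v, rfl⟩ := card_eq_one.1 h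
    exact ⟨⟨v, hσ⟩, rfl⟩

@[simp]
theorem singleEquiv_apply (a : K.Vert) : (K.singleEquiv a).1 = single a :=
  rfl

theorem dimColor_eq_iff {W : Type*} [DecidableEq W] {L : AbstractComplex W} {σ : K.SdVert}
    {τ : L.SdVert} : L.dimColor τ = K.dimColor σ ↔ τ.1.card = σ.1.card := by
  have := σ.2.2.card_pos
  have := τ.2.2.card_pos
  unfold dimColor
  omega

end OneComplex

section TwoComplexes

variable {V₁ V₂ : Type*} [DecidableEq V₁] [DecidableEq V₂]
  {K₁ : AbstractComplex V₁} {K₂ : AbstractComplex V₂}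

def imageSimplex (f : K₁.Vert → K₂.Vert) (σ : Finset V₁) : Finset V₂ :=
  (K₁.verts σ).image fun a => (f a).1

theorem mem_imageSimplex {f : K₁.Vert → K₂.Vert} {σ : Finset V₁} {w : V₂} :
    w ∈ imageSimplex f σ ↔ ∃ a : K₁.Vert, a.1 ∈ σ ∧ (f a).1 = w := by
  simp only [imageSimplex, mem_image, mem_verts]

theorem card_imageSimplex {f : K₁.Vert → K₂.Vert} (hf : Function.Injective f) {σ : Finset V₁}
    (hσ : σ ∈ K₁.simplices) : (imageSimplex f σ).card = σ.card :=
  (card_image_of_injective _ (Vert.val_injective.comp hf)).trans (card_verts hσ)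

theorem imageSimplex_subset_imageSimplex_iff {f : K₁.Vert → K₂.Vert} (hf : Function.Injective f)
    {σ τ : Finset V₁} (hσ : σ ∈ K₁.simplices) :
    imageSimplex f σ ⊆ imageSimplex f τ ↔ σ ⊆ τ :=
  (image_subset_image_iff (Vert.val_injective.comp hf)).trans (verts_subset_verts_iff hσ)

theorem verts_imageSimplex (f : K₁.Vert → K₂.Vert) (σ : Finset V₁) :
    K₂.verts (imageSimplex f σ) = (K₁.verts σ).image f := by
  show K₂.verts ((K₁.verts σ).image ((fun b : K₂.Vert => b.1) ∘ f)) = _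
  rw [← image_image, verts_image_val]

theorem imageSimplex_symm_imageSimplex (f : K₁.Vert ≃ K₂.Vert) {σ : Finset V₁}
    (hσ : σ ∈ K₁.simplices) : imageSimplex f.symm (imageSimplex f σ) = σ := by
  rw [imageSimplex, verts_imageSimplex, image_image]
  simpa [Function.comp_def] using image_val_verts hσ

theorem _root_.IsComplexIso.imageSimplex_mem {f : K₁.Vert ≃ K₂.Vert} (hf : IsComplexIso K₁ K₂ f)
    {σ : Finset V₁} (hσ : σ ∈ K₁.simplices) : imageSimplex f σ ∈ K₂.simplices :=
  (hf (K₁.verts σ)).1 (by rwa [image_val_verts hσ])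

theorem _root_.IsComplexIso.symm {f : K₁.Vert ≃ K₂.Vert} (hf : IsComplexIso K₁ K₂ f) :
    IsComplexIso K₂ K₁ f.symm := by
  intro s
  simpa [image_image, Function.comp_def] using (hf (s.image f.symm)).symm

theorem nonempty_imageSimplex {f : K₁.Vert → K₂.Vert} (hf : Function.Injective f)
    (σ : K₁.SdVert) : (imageSimplex f σ.1).Nonempty := by
  rw [← card_pos, card_imageSimplex hf σ.2.1]
  exact σ.2.2.card_pos

def sdMap {f : K₁.Vert ≃ K₂.Vert} (hf : IsComplexIso K₁ K₂ f) (σ : K₁.SdVert) : K₂.SdVert :=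
  ⟨imageSimplex f σ.1, hf.imageSimplex_mem σ.2.1, nonempty_imageSimplex f.injective σ⟩

def sdOrderIso {f : K₁.Vert ≃ K₂.Vert} (hf : IsComplexIso K₁ K₂ f) :
    K₁.SdVert ≃o K₂.SdVert where
  toFun := sdMap hf
  invFun := sdMap hf.symm
  left_inv σ := Subtype.ext (imageSimplex_symm_imageSimplex f σ.2.1)
  right_inv τ := Subtype.ext (imageSimplex_symm_imageSimplex f.symm τ.2.1)
  map_rel_iff' {σ _} := imageSimplex_subset_imageSimplex_iff f.injective σ.2.1

def sd1IsoOfOrderIso (ψ : K₁.SdVert ≃o K₂.SdVert) : K₁.Sd1 ≃g K₂.Sd1 where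
  toEquiv := ψ.toEquiv
  map_rel_iff' := or_congr ψ.lt_iff_lt ψ.lt_iff_lt

def orderIsoOfCardEq (φ : K₁.Sd1 ≃g K₂.Sd1) (hφ : ∀ σ, (φ σ).1.card = σ.1.card) :
    K₁.SdVert ≃o K₂.SdVert :=
  OrderIso.ofRelIsoLT ⟨φ.toEquiv, lt_iff_lt_of_comparable_iff strictMono_card strictMono_card
    φ.toEquiv hφ (fun _ _ => φ.map_rel_iff) _ _⟩

section OfOrderIso

variable (ψ : K₁.SdVert ≃o K₂.SdVert) (hψ : ∀ σ, (ψ σ).1.card = σ.1.card)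

noncomputable def vertEquiv : K₁.Vert ≃ K₂.Vert :=
  K₁.singleEquiv.trans <|
    (ψ.toEquiv.subtypeEquiv fun σ => by rw [OrderIso.coe_toEquiv, hψ]).trans K₂.singleEquiv.symm

theorem single_vertEquiv (a : K₁.Vert) : single (vertEquiv ψ hψ a) = ψ (single a) := by
  rw [← singleEquiv_apply, vertEquiv]
  simp

theorem vertEquiv_mem_apply_iff (a : K₁.Vert) (σ : K₁.SdVert) :
    (vertEquiv ψ hψ a).1 ∈ (ψ σ).1 ↔ a.1 ∈ σ.1 := by
  rw [← single_le_iff, single_vertEquiv, ψ.le_iff_le, single_le_iff]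

theorem val_apply_eq_imageSimplex (σ : K₁.SdVert) :
    (ψ σ).1 = imageSimplex (vertEquiv ψ hψ) σ.1 := by
  ext w
  rw [mem_imageSimplex]
  constructor
  · intro hw
    set b : K₂.Vert := ⟨w, singleton_mem_of_mem (ψ σ).2.1 hw⟩
    refine ⟨(vertEquiv ψ hψ).symm b, ?_, congrArg Subtype.val ((vertEquiv ψ hψ).apply_symm_apply b)⟩
    rwa [← vertEquiv_mem_apply_iff ψ hψ, Equiv.apply_symm_apply]
  · rintro ⟨a, ha, rfl⟩
    exact (vertEquiv_mem_apply_iff ψ hψ a σ).2 ha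

end OfOrderIso

theorem isComplexIso_of_val_eq_imageSimplex (f : K₁.Vert ≃ K₂.Vert) (ψ : K₁.SdVert ≃ K₂.SdVert)
    (h : ∀ σ, (ψ σ).1 = imageSimplex f σ.1) : IsComplexIso K₁ K₂ f := by
  intro s
  rcases s.eq_empty_or_nonempty with rfl | hs
  · simp [K₁.empty_mem, K₂.empty_mem]
  constructor
  · intro hs₁
    have hψs := h ⟨_, hs₁, hs.image _⟩
    rw [imageSimplex, verts_image_val] at hψs
    exact hψs ▸ (ψ _).2.1
  · intro hs₂
    set σ := ψ.symm ⟨_, hs₂, hs.image _⟩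
    have hψσ : imageSimplex f σ.1 = s.image fun a => (f a).1 :=
      (h σ).symm.trans (congrArg Subtype.val (ψ.apply_symm_apply _))
    have hs_eq : K₁.verts σ.1 = s := image_injective (Vert.val_injective.comp f.injective) hψσ
    rw [← hs_eq, image_val_verts σ.2.1]
    exact σ.2.1

end TwoComplexes

end AbstractComplex

open AbstractComplex in
/-- Two finite abstract simplicial complexes `K1` and `K2` are isomorphic if and
only if the colored graphs `(Sd1 K1, dim)` and `(Sd1 K2, dim)` are
color-preserving isomorphic. -/
theorem complexIso_iff_sd1_colorIso
    {V1 V2 : Type*} [DecidableEq V1] [DecidableEq V2]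
    (K1 : AbstractComplex V1) (K2 : AbstractComplex V2) :
    (∃ f : K1.Vert ≃ K2.Vert, IsComplexIso K1 K2 f) ↔
      (∃ φ : K1.Sd1 ≃g K2.Sd1, ∀ v, K2.dimColor (φ v) = K1.dimColor v) := by
  constructor
  · rintro ⟨f, hf⟩
    exact ⟨sd1IsoOfOrderIso (sdOrderIso hf),
      fun σ => dimColor_eq_iff.2 (card_imageSimplex f.injective σ.2.1)⟩
  · rintro ⟨φ, hφ⟩
    have hcard : ∀ σ, (φ σ).1.card = σ.1.card := fun σ => dimColor_eq_iff.1 (hφ σ)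
    let ψ := orderIsoOfCardEq φ hcard
    exact ⟨vertEquiv ψ hcard, isComplexIso_of_val_eq_imageSimplex _ ψ.toEquiv
      (val_apply_eq_imageSimplex ψ hcard)⟩
end

section
/- If f is a color-preserving isomorphism between the colored graphs (Sd1(K1), dim) and (Sd1(K2), dim) of two finite abstract simplicial complexes K1 and K2, then there exists an isomorphism f0 between the simplicial complexes K1 and K2 such that for every vertex a of K1 the map f sends the vertex {a} of Sd1(K1) to the vertex {f0(a)} of Sd1(K2). -/
open Finset

/-! A color-preserving isomorphism `φ : Sd1 K1 ≃ Sd1 K2` preserves cardinalities, hence maps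
the vertex `{a}` to some `{F a}` and, by comparing cardinalities along the edges `{a} ⊂ σ`,
preserves inclusions of simplices. So `F` maps simplices to simplices, and the same holds for
the map `G` obtained from `φ⁻¹`; since `φ⁻¹ ∘ φ = id` on singletons, `G` inverts `F`. -/

namespace AbstractComplex

variable {V V1 V2 : Type*} [DecidableEq V] [DecidableEq V1] [DecidableEq V2]

instance inst_s1 (K : AbstractComplex V) : DecidableEq K.Vert :=
  inferInstanceAs (DecidableEq {a : V // ({a} : Finset V) ∈ K.simplices})

def singletonSd {K : AbstractComplex V} (a : K.Vert) : K.SdVert :=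
  ⟨{a.1}, a.2, singleton_nonempty a.1⟩

lemma singletonSd_injective {K : AbstractComplex V} :
    Function.Injective (singletonSd (K := K)) := fun _ _ h =>
  Subtype.ext (singleton_injective (congrArg Subtype.val h))

lemma SdVert.card_pos {K : AbstractComplex V} (σ : K.SdVert) : 0 < σ.1.card :=
  Finset.card_pos.2 σ.2.2

variable {K1 : AbstractComplex V1} {K2 : AbstractComplex V2}

lemma card_map_eq_of_dimColor {φ : K1.SdVert → K2.SdVert}
    (hφ : ∀ v, K2.dimColor (φ v) = K1.dimColor v) (v : K1.SdVert) :
    (φ v).1.card = v.1.card := by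
  have := hφ v
  have := v.card_pos
  have := (φ v).card_pos
  unfold dimColor at *
  omega

lemma exists_map_singletonSd {φ : K1.SdVert → K2.SdVert}
    (hcard : ∀ v, (φ v).1.card = v.1.card) :
    ∃ F : K1.Vert → K2.Vert, ∀ a, φ (singletonSd a) = singletonSd (F a) := by
  have (a : K1.Vert) : ∃ b : K2.Vert, φ (singletonSd a) = singletonSd b := by
    obtain ⟨b, hb⟩ := card_eq_one.1 ((hcard (singletonSd a)).trans (card_singleton a.1))
    exact ⟨⟨b, hb ▸ (φ (singletonSd a)).2.1⟩, Subtype.ext hb⟩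
  exact ⟨fun a => (this a).choose, fun a => (this a).choose_spec⟩

/-- The edge `σ ⊂ τ` must go to an edge pointing the same way, the larger simplex being the
image of `τ`. -/
lemma map_subset_map {φ : K1.Sd1 →g K2.Sd1} (hcard : ∀ v, (φ v).1.card = v.1.card)
    {σ τ : K1.SdVert} (h : σ.1 ⊆ τ.1) : (φ σ).1 ⊆ (φ τ).1 := by
  obtain rfl | hne := eq_or_ne σ τ
  · exact subset_rfl
  have hss : σ.1 ⊂ τ.1 := ssubset_of_subset_of_ne h (fun e => hne (Subtype.ext e))
  rcases φ.map_adj (Or.inl hss : K1.Sd1.Adj σ τ) with h' | h'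
  · exact h'.subset
  · have h'' := card_lt_card h'
    rw [hcard, hcard] at h''
    exact absurd h'' (card_lt_card hss).asymm

lemma image_mem_of_map_singletonSd {φ : K1.Sd1 →g K2.Sd1}
    (hcard : ∀ v, (φ v).1.card = v.1.card) {F : K1.Vert → K2.Vert}
    (hF : ∀ a, φ (singletonSd a) = singletonSd (F a)) {s : Finset K1.Vert}
    (hs : s.image (fun a => a.1) ∈ K1.simplices) :
    s.image (fun a => (F a).1) ∈ K2.simplices := by
  rcases s.eq_empty_or_nonempty with rfl | hne
  · simpa using K2.empty_mem
  let σ : K1.SdVert := ⟨s.image (fun a => a.1), hs, hne.image _⟩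
  refine K2.downClosed _ (φ σ).2.1 _ fun x hx => ?_
  obtain ⟨a, ha, rfl⟩ := mem_image.1 hx
  have hsub : (singletonSd a).1 ⊆ σ.1 := singleton_subset_iff.2 (mem_image_of_mem _ ha)
  have h := map_subset_map hcard hsub
  rw [hF] at h
  exact singleton_subset_iff.1 h

end AbstractComplex

open AbstractComplex

lemma isComplexIso_of_image_mem {V1 V2 : Type*} [DecidableEq V1] [DecidableEq V2]
    {K1 : AbstractComplex V1} {K2 : AbstractComplex V2} (e : K1.Vert ≃ K2.Vert)
    (he : ∀ s : Finset K1.Vert, s.image (fun a => a.1) ∈ K1.simplices →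
      s.image (fun a => (e a).1) ∈ K2.simplices)
    (he' : ∀ t : Finset K2.Vert, t.image (fun b => b.1) ∈ K2.simplices →
      t.image (fun b => (e.symm b).1) ∈ K1.simplices) :
    IsComplexIso K1 K2 e := by
  refine fun s => ⟨he s, fun h => ?_⟩
  have := he' (s.image e) (by rwa [image_image])
  simpa [image_image, Function.comp_def] using this

/-- If `φ` is a color-preserving isomorphism between the colored graphs
`(Sd1 K1, dim)` and `(Sd1 K2, dim)`, then there is an isomorphism `f0` between the
simplicial complexes `K1` and `K2` such that `φ` sends the vertex `{a}` of
`Sd1 K1` to the vertex `{f0 a}` of `Sd1 K2`, for every vertex `a` of `K1`. -/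
theorem colorIso_to_complexIso
    {V1 V2 : Type*} [DecidableEq V1] [DecidableEq V2]
    (K1 : AbstractComplex V1) (K2 : AbstractComplex V2)
    (φ : K1.Sd1 ≃g K2.Sd1)
    (hφ : ∀ v, K2.dimColor (φ v) = K1.dimColor v) :
    ∃ f0 : K1.Vert ≃ K2.Vert, IsComplexIso K1 K2 f0 ∧
      ∀ a : K1.Vert,
        (φ ⟨({a.1} : Finset V1), a.2, Finset.singleton_nonempty a.1⟩).1
          = ({(f0 a).1} : Finset V2) := by
  have hcard := card_map_eq_of_dimColor hφ
  have hcard' (w : K2.SdVert) : (φ.symm w).1.card = w.1.card := by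
    rw [← hcard, φ.apply_symm_apply]
  obtain ⟨F, hF⟩ := exists_map_singletonSd hcard
  obtain ⟨G, hG⟩ := exists_map_singletonSd hcard'
  have hGF : Function.LeftInverse G F := fun a =>
    singletonSd_injective (by rw [← hG, ← hF, φ.symm_apply_apply])
  have hFG : Function.RightInverse G F := fun b =>
    singletonSd_injective (by rw [← hF, ← hG, φ.apply_symm_apply])
  let f0 : K1.Vert ≃ K2.Vert := ⟨F, G, hGF, hFG⟩
  refine ⟨f0, isComplexIso_of_image_mem f0 ?_ ?_, fun a => congrArg Subtype.val (hF a)⟩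
  · exact fun s => image_mem_of_map_singletonSd (φ := φ.toHom) hcard hF
  · exact fun t => image_mem_of_map_singletonSd (φ := φ.symm.toHom) hcard' hG
end

section
/- Let K1 and K2 be finite abstract simplicial complexes and let G be a subgraph of Sd1(K1) such that (G, dim) is color-preserving isomorphic to (Sd1(K2), dim). Then the vertex set of G is downward closed: for every vertex τ of G and every nonempty subset τ' ⊆ τ, the simplex τ' is also a vertex of G. Consequently, the family K1' consisting of the empty set together with all simplices τ ∈ K1 that are vertices of G is a subcomplex of K1, and G equals Sd1(K1'). -/
open Finset

/-!
A color-preserving isomorphism `φ : G ≃ Sd1 K2` preserves the cardinality of simplices.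
If `τ` is a vertex of `G` with `|τ| = k`, the `2^k - 2` proper nonempty faces of `φ τ` are
neighbours of `φ τ` of smaller dimension, so their preimages are `2^k - 2` distinct neighbours
of `τ` in `G ⊆ Sd1 K1` of smaller dimension, i.e. proper nonempty faces of `τ`. Since `τ` has
only `2^k - 2` such faces, all of them are vertices of `G` adjacent to `τ` in `G`. Hence the
vertex set of `G` is downward closed and `G` is an induced subgraph of `Sd1 K1`, which is
exactly `Sd1` of the subcomplex spanned by its vertices.
-/

namespace Finset

variable {α : Type*} [DecidableEq α]

theorem card_ssubsets_erase_empty (s : Finset α) : #(s.ssubsets.erase ∅) = 2 ^ #s - 2 := by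
  rcases s.eq_empty_or_nonempty with rfl | hs
  · simp [ssubsets]
  · rw [card_erase_of_mem (empty_mem_ssubsets hs), ssubsets,
      card_erase_of_mem (mem_powerset_self s), card_powerset]
    omega

end Finset

namespace AbstractComplex

variable {V V' : Type*} [DecidableEq V] [DecidableEq V']

theorem dimColor_eq_iff_s3 {K : AbstractComplex V} {K' : AbstractComplex V'} {σ : K.SdVert}
    {σ' : K'.SdVert} : K'.dimColor σ' = K.dimColor σ ↔ #σ'.1 = #σ.1 := by
  have hσ := σ.2.2.card_pos
  have hσ' := σ'.2.2.card_pos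
  unfold dimColor
  omega

theorem ssubset_of_sd1Adj_of_card_lt {K : AbstractComplex V} {σ τ : K.SdVert}
    (hadj : K.Sd1.Adj σ τ) (hcard : #σ.1 < #τ.1) : σ.1 ⊂ τ.1 :=
  hadj.resolve_right fun h => (card_lt_card h).not_gt hcard

section Subcomplex

variable (K : AbstractComplex V)

open Classical in
noncomputable def subcomplex (S : Set K.SdVert)
    (hS : ∀ σ τ : K.SdVert, σ.1 ⊆ τ.1 → τ ∈ S → σ ∈ S) : AbstractComplex V where
  simplices := {t ∈ K.simplices | t = ∅ ∨ ∃ h : t ∈ K.simplices ∧ t.Nonempty, ⟨t, h⟩ ∈ S}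
  empty_mem := mem_filter.2 ⟨K.empty_mem, Or.inl rfl⟩
  downClosed σ hσ τ hτσ := by
    obtain ⟨hσK, hσS⟩ := mem_filter.1 hσ
    have hτK := K.downClosed σ hσK τ hτσ
    refine mem_filter.2 ⟨hτK, τ.eq_empty_or_nonempty.imp_right fun hτ => ⟨⟨hτK, hτ⟩, ?_⟩⟩
    obtain rfl | ⟨hσ', hσS⟩ := hσS
    · exact absurd (subset_empty.1 hτσ) hτ.ne_empty
    · exact hS _ ⟨σ, hσ'⟩ hτσ hσS

variable {K} {S : Set K.SdVert} {hS : ∀ σ τ : K.SdVert, σ.1 ⊆ τ.1 → τ ∈ S → σ ∈ S}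

open Classical in
theorem mem_subcomplex_simplices {t : Finset V} :
    t ∈ (K.subcomplex S hS).simplices ↔
      t = ∅ ∨ ∃ h : t ∈ K.simplices ∧ t.Nonempty, ⟨t, h⟩ ∈ S := by
  refine mem_filter.trans ⟨And.right, fun ht => ⟨?_, ht⟩⟩
  obtain rfl | ⟨h, -⟩ := ht
  exacts [K.empty_mem, h.1]

open Classical in
theorem subcomplex_simplices_subset : (K.subcomplex S hS).simplices ⊆ K.simplices :=
  filter_subset _ _

def isoSd1Subcomplex (G : K.Sd1.Subgraph) (hG : G.IsInduced)
    (hS : ∀ σ τ : K.SdVert, σ.1 ⊆ τ.1 → τ ∈ G.verts → σ ∈ G.verts) :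
    G.coe ≃g (K.subcomplex G.verts hS).Sd1 where
  toFun v := ⟨v.1.1, mem_subcomplex_simplices.2 (Or.inr ⟨v.1.2, v.2⟩), v.1.2.2⟩
  invFun σ := ⟨⟨σ.1, subcomplex_simplices_subset σ.2.1, σ.2.2⟩,
    ((mem_subcomplex_simplices.1 σ.2.1).resolve_left σ.2.2.ne_empty).choose_spec⟩
  left_inv _ := rfl
  right_inv _ := rfl
  map_rel_iff' := ⟨fun h => hG.adj.2 h, fun h => G.adj_sub h⟩

end Subcomplex

section ColorIso

variable {V₁ V₂ : Type*} [DecidableEq V₁] [DecidableEq V₂]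
  {K₁ : AbstractComplex V₁} {K₂ : AbstractComplex V₂} {G : K₁.Sd1.Subgraph}
  (φ : G.coe ≃g K₂.Sd1) (hφ : ∀ v : G.verts, K₂.dimColor (φ v) = K₁.dimColor v.1)
include hφ

theorem adj_and_ssubset_of_map_ssubset {v w : G.verts} (h : (φ v).1 ⊂ (φ w).1) :
    G.Adj v w ∧ v.1.1 ⊂ w.1.1 := by
  have hadj : G.Adj v w := φ.map_adj_iff.1 (Or.inl h)
  have hcard : #v.1.1 < #w.1.1 := by
    rw [← dimColor_eq_iff_s3.1 (hφ v), ← dimColor_eq_iff_s3.1 (hφ w)]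
    exact card_lt_card h
  exact ⟨hadj, ssubset_of_sd1Adj_of_card_lt (G.adj_sub hadj) hcard⟩

theorem adj_of_ssubset {σ τ : K₁.SdVert} (hτ : τ ∈ G.verts) (h : σ.1 ⊂ τ.1) : G.Adj σ τ := by
  set w : G.verts := ⟨τ, hτ⟩
  have hmem : ∀ x ∈ (φ w).1.ssubsets.erase ∅, x ∈ K₂.simplices ∧ x.Nonempty := fun x hx =>
    ⟨K₂.downClosed _ (φ w).2.1 x (mem_ssubsets.1 (mem_of_mem_erase hx)).subset,
      nonempty_iff_ne_empty.2 (ne_of_mem_erase hx)⟩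
  let pullback : ∀ x ∈ (φ w).1.ssubsets.erase ∅, G.verts := fun x hx => φ.symm ⟨x, hmem x hx⟩
  have hpullback : ∀ x hx, G.Adj (pullback x hx) τ ∧ (pullback x hx).1.1 ⊂ τ.1 := fun x hx =>
    adj_and_ssubset_of_map_ssubset φ hφ (w := w) <| by
      rw [show φ (pullback x hx) = ⟨x, hmem x hx⟩ from φ.apply_symm_apply _]
      exact mem_ssubsets.1 (mem_of_mem_erase hx)
  have hcard : #((φ w).1.ssubsets.erase ∅) = #(τ.1.ssubsets.erase ∅) := by
    rw [card_ssubsets_erase_empty, card_ssubsets_erase_empty, dimColor_eq_iff_s3.1 (hφ w)]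
  obtain ⟨x, hx, hσ⟩ := surj_on_of_inj_on_of_card_le (fun x hx => (pullback x hx).1.1)
    (fun x hx => mem_erase.2 ⟨(pullback x hx).1.2.2.ne_empty, mem_ssubsets.2 (hpullback x hx).2⟩)
    (fun x₁ x₂ hx₁ hx₂ hval => by
      simpa using congrArg Subtype.val (φ.symm.injective (Subtype.ext (Subtype.ext hval))))
    hcard.ge σ.1 (mem_erase.2 ⟨σ.2.2.ne_empty, mem_ssubsets.2 h⟩)
  rw [show σ = (pullback x hx).1 from Subtype.ext hσ]
  exact (hpullback x hx).1

theorem mem_verts_of_subset {σ τ : K₁.SdVert} (h : σ.1 ⊆ τ.1) (hτ : τ ∈ G.verts) :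
    σ ∈ G.verts := by
  obtain hστ | hστ := h.eq_or_ssubset
  · rwa [Subtype.ext hστ]
  · exact G.edge_vert (adj_of_ssubset φ hφ hτ hστ)

theorem isInduced_of_colorIso : G.IsInduced := by
  rintro σ hσ τ hτ (h | h)
  · exact adj_of_ssubset φ hφ hτ h
  · exact (adj_of_ssubset φ hφ hσ h).symm

end ColorIso

end AbstractComplex

/-- If `G` is a subgraph of `Sd1 K1` such that `(G, dim)` is color-preserving
isomorphic to `(Sd1 K2, dim)`, then the vertex set of `G` is downward closed
(every nonempty subset of a vertex of `G` is again a vertex of `G`), and the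
family `K1'` consisting of the empty set together with all simplices of `K1`
that are vertices of `G` is a subcomplex of `K1` with `G = Sd1 K1'` (witnessed by
a graph isomorphism that is the identity on the underlying simplices). -/
theorem subgraph_colorIso_verts_downClosed
    {V1 V2 : Type*} [DecidableEq V1] [DecidableEq V2]
    (K1 : AbstractComplex V1) (K2 : AbstractComplex V2)
    (G : K1.Sd1.Subgraph) (φ : G.coe ≃g K2.Sd1)
    (hφ : ∀ v : G.verts, K2.dimColor (φ v) = K1.dimColor v.1) :
    (∀ τ ∈ G.verts, ∀ τ' : Finset V1, τ' ⊆ τ.1 → τ'.Nonempty →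
        ∀ h : τ' ∈ K1.simplices ∧ τ'.Nonempty, (⟨τ', h⟩ : K1.SdVert) ∈ G.verts) ∧
      ∃ K1' : AbstractComplex V1,
        (∀ τ : Finset V1, τ ∈ K1'.simplices ↔
          (τ = ∅ ∨ ∃ h : τ ∈ K1.simplices ∧ τ.Nonempty,
            (⟨τ, h⟩ : K1.SdVert) ∈ G.verts)) ∧
        K1'.simplices ⊆ K1.simplices ∧
        ∃ e : G.coe ≃g K1'.Sd1, ∀ v : G.verts, (e v).1 = v.1.1 := by
  have hdown : ∀ σ τ : K1.SdVert, σ.1 ⊆ τ.1 → τ ∈ G.verts → σ ∈ G.verts :=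
    fun _ _ => AbstractComplex.mem_verts_of_subset φ hφ
  refine ⟨fun τ hτ τ' hsub _ h => hdown ⟨τ', h⟩ τ hsub hτ, K1.subcomplex G.verts hdown,
    fun _ => AbstractComplex.mem_subcomplex_simplices,
    AbstractComplex.subcomplex_simplices_subset, ?_⟩
  exact ⟨AbstractComplex.isoSd1Subcomplex G (AbstractComplex.isInduced_of_colorIso φ hφ) hdown,
    fun _ => rfl⟩
end

section
/- Let K be a finite set of triangles over a vertex type V, let T ⊆ K be its set of conflict triangles, and let k be a natural number. Suppose there exists a set D ⊆ K with |D| ≤ k such that every 2-element subset of V is an edge of at most two triangles of K \ D. Then |T| ≤ 7k. -/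
/-!
Delete the at most `k` triangles of `D`. A conflict triangle `t ∉ D` has an edge `e` lying in at
least three triangles of `K` but in at most two of `K \ D`, so `e` is also an edge of some `d ∈ D`:
`t` shares an edge with a deleted triangle. Each `d ∈ D` has three edges, each lying in at most two
surviving triangles, so at most `6` surviving triangles share an edge with `d`. Hence
`|T| ≤ |D| + 6 |D| ≤ 7k`.
-/

open Finset

/-- A triangle `t ∈ K` is a conflict triangle if some edge of `t` (a 2-element
subset of `t`) is an edge of at least three triangles of `K`.
`conflictTriangles K` is the set of conflict triangles of `K`. -/
def conflictTriangles {V : Type*} [DecidableEq V] (K : Finset (Finset V)) :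
    Finset (Finset V) :=
  K.filter fun t => ∃ e ∈ t.powerset, e.card = 2 ∧ 3 ≤ (K.filter fun s => e ⊆ s).card

theorem exists_mem_of_card_filter_sdiff_lt {α : Type*} [DecidableEq α] {K D : Finset α}
    {p : α → Prop} [DecidablePred p] (h : ((K \ D).filter p).card < (K.filter p).card) :
    ∃ d ∈ D, p d := by
  by_contra! hD
  have hsub : K.filter p ⊆ (K \ D).filter p := fun x hx => by
    obtain ⟨hxK, hpx⟩ := mem_filter.mp hx
    exact mem_filter.mpr ⟨mem_sdiff.mpr ⟨hxK, fun hxD => hD x hxD hpx⟩, hpx⟩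
  exact (card_le_card hsub).not_gt h

section

variable {V : Type*} [DecidableEq V]

def edgeNeighbors (L : Finset (Finset V)) (d : Finset V) : Finset (Finset V) :=
  (d.powersetCard 2).biUnion fun e => L.filter (e ⊆ ·)

theorem mem_edgeNeighbors {L : Finset (Finset V)} {d t : Finset V} :
    t ∈ edgeNeighbors L d ↔ t ∈ L ∧ ∃ e ⊆ d, e.card = 2 ∧ e ⊆ t := by
  simp only [edgeNeighbors, mem_biUnion, mem_powersetCard, mem_filter]
  constructor
  · rintro ⟨e, ⟨hed, he⟩, htL, het⟩
    exact ⟨htL, e, hed, he, het⟩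
  · rintro ⟨htL, e, hed, he, het⟩
    exact ⟨e, ⟨hed, he⟩, htL, het⟩

theorem card_edgeNeighbors_le {L : Finset (Finset V)} {m : ℕ}
    (hL : ∀ e : Finset V, e.card = 2 → (L.filter (e ⊆ ·)).card ≤ m) (d : Finset V) :
    (edgeNeighbors L d).card ≤ d.card.choose 2 * m := by
  rw [← card_powersetCard]
  exact card_biUnion_le_card_mul _ _ _ fun e he => hL e (mem_powersetCard.mp he).2

theorem conflictTriangles_subset_union_biUnion_edgeNeighbors {K D : Finset (Finset V)}
    (hedge : ∀ e : Finset V, e.card = 2 → ((K \ D).filter (e ⊆ ·)).card ≤ 2) :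
    conflictTriangles K ⊆ D ∪ D.biUnion (edgeNeighbors (K \ D)) := by
  intro t ht
  obtain ⟨htK, e, het, he, hthree⟩ := mem_filter.mp ht
  by_cases htD : t ∈ D
  · exact mem_union_left _ htD
  obtain ⟨d, hdD, hed⟩ : ∃ d ∈ D, e ⊆ d :=
    exists_mem_of_card_filter_sdiff_lt ((hedge e he).trans_lt hthree)
  refine mem_union_right _ (mem_biUnion.mpr ⟨d, hdD, mem_edgeNeighbors.mpr ?_⟩)
  exact ⟨mem_sdiff.mpr ⟨htK, htD⟩, e, hed, he, mem_powerset.mp het⟩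

end

/-- If at most `k` triangles can be deleted from `K` so that every edge is an edge
of at most two of the remaining triangles, then `K` has at most `7k` conflict
triangles. -/
theorem conflictTriangles_card_le
    {V : Type*} [DecidableEq V] (K : Finset (Finset V))
    (hK : ∀ t ∈ K, t.card = 3) (k : ℕ)
    (hD : ∃ D ⊆ K, D.card ≤ k ∧
      ∀ e : Finset V, e.card = 2 → ((K \ D).filter fun t => e ⊆ t).card ≤ 2) :
    (conflictTriangles K).card ≤ 7 * k := by
  obtain ⟨D, hDK, hDk, hedge⟩ := hD
  have hnbr : ∀ d ∈ D, (edgeNeighbors (K \ D) d).card ≤ 6 := fun d hd => by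
    simpa [hK d (hDK hd)] using card_edgeNeighbors_le hedge d
  calc (conflictTriangles K).card
      ≤ (D ∪ D.biUnion (edgeNeighbors (K \ D))).card :=
        card_le_card (conflictTriangles_subset_union_biUnion_edgeNeighbors hedge)
    _ ≤ D.card + D.card * 6 :=
        (card_union_le _ _).trans (Nat.add_le_add_left (card_biUnion_le_card_mul _ _ _ hnbr) _)
    _ ≤ 7 * k := by omega
end

section
/- Let K be a finite set of triangles over a vertex type V such that every edge of a triangle of K is an edge of at least two triangles of K, and let T ⊆ K be its set of conflict triangles. Let B be the set of edges that are edges of exactly one triangle of K \ T (the boundary edges of K \ T). Then |B| ≤ 3·|T|. In particular, if |T| ≤ 7k then the total number of boundary edges of K \ T is at most 21k. -/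
open Finset

/-- Suppose every edge of a triangle of `K` is an edge of at least two triangles
of `K`, and let `B` be the set of boundary edges of `K \ T`, where `T` is the set
of conflict triangles of `K`, i.e. the edges that are edges of exactly one
triangle of `K \ T`. Then `|B| ≤ 3 * |T|`; in particular, if `|T| ≤ 7k` then
`|B| ≤ 21k`. -/
theorem boundary_card_le
    {V : Type*} [DecidableEq V] (K : Finset (Finset V))
    (hK : ∀ t ∈ K, t.card = 3)
    (h2 : ∀ t ∈ K, ∀ e ⊆ t, e.card = 2 → 2 ≤ (K.filter fun s => e ⊆ s).card)
    (B : Finset (Finset V))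
    (hB : ∀ e : Finset V, e ∈ B ↔ e.card = 2 ∧
      ((K \ conflictTriangles K).filter fun s => e ⊆ s).card = 1) :
    B.card ≤ 3 * (conflictTriangles K).card ∧
      ∀ k : ℕ, (conflictTriangles K).card ≤ 7 * k → B.card ≤ 21 * k := by
  set T := conflictTriangles K with hT
  have hTK : T ⊆ K := Finset.filter_subset _ _
  have hmain : B.card ≤ 3 * T.card := by
    have hsub : B ⊆ T.biUnion fun t => t.powersetCard 2 := by
      intro e he
      obtain ⟨he2, hcard⟩ := (hB e).1 he
      have hne : ((K \ T).filter fun s => e ⊆ s).Nonempty := by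
        rw [← Finset.card_pos, hcard]; norm_num
      obtain ⟨s, hs⟩ := hne
      rw [Finset.mem_filter, Finset.mem_sdiff] at hs
      obtain ⟨⟨hsK, _⟩, hes⟩ := hs
      have h2' := h2 s hsK e hes he2
      have hKsub : K ⊆ (K \ T) ∪ T := by
        intro x hx
        rw [Finset.mem_union, Finset.mem_sdiff]
        by_cases hxT : x ∈ T
        · exact Or.inr hxT
        · exact Or.inl ⟨hx, hxT⟩
      have hsplit : (K.filter fun s => e ⊆ s).card ≤
          ((K \ T).filter fun s => e ⊆ s).card + (T.filter fun s => e ⊆ s).card := by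
        calc (K.filter fun s => e ⊆ s).card
            ≤ (((K \ T) ∪ T).filter fun s => e ⊆ s).card :=
              Finset.card_le_card (Finset.filter_subset_filter _ hKsub)
          _ = (((K \ T).filter fun s => e ⊆ s) ∪ (T.filter fun s => e ⊆ s)).card := by
              rw [Finset.filter_union]
          _ ≤ _ := Finset.card_union_le _ _
      rw [hcard] at hsplit
      have hTne : (T.filter fun s => e ⊆ s).Nonempty := by
        rw [← Finset.card_pos]; omega
      obtain ⟨t, ht⟩ := hTne
      rw [Finset.mem_filter] at ht
      exact Finset.mem_biUnion.mpr ⟨t, ht.1, Finset.mem_powersetCard.mpr ⟨ht.2, he2⟩⟩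
    calc B.card ≤ (T.biUnion fun t => t.powersetCard 2).card := Finset.card_le_card hsub
      _ ≤ ∑ t ∈ T, (t.powersetCard 2).card := Finset.card_biUnion_le
      _ = ∑ t ∈ T, 3 := by
          refine Finset.sum_congr rfl fun t ht => ?_
          rw [Finset.card_powersetCard, hK t (hTK ht)]; rfl
      _ = 3 * T.card := by rw [Finset.sum_const, smul_eq_mul, mul_comm]
  exact ⟨hmain, fun k hk => by omega⟩
end
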